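/- In a finite deterministic MDP with discount factor 0 ≤ γ < 1, stationary deterministic policies are sufficient for optimality: for every state s, the optimal value over all action streams equals the maximum over stationary deterministic policies, i.e., V* s = ⨆ π : S → A, V^π s. -/

import Mathlib

/-!
Let `V*` be the optimal value. Splitting off the first step of a return shows that `V*` satisfies
the Bellman equation `V* s = max_a (r s a + γ V* (step s a))`; since there are finitely many
actions the maximum is attained, which defines a greedy stationary policy `π`. Along the orbit of
`π` the Bellman equation telescopes, and as `V*` is bounded and `γ^n → 0` it sums to `V^π s`.
So `V* s = V^π s ≤ ⨆ π, V^π s`, while every `V^π s` is the return of an action stream.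
-/

open Filter Topology

theorem norm_pow_mul_le {γ C : ℝ} {c : ℕ → ℝ} (hγ0 : 0 ≤ γ) (hc : ∀ t, |c t| ≤ C) (t : ℕ) :
    ‖γ ^ t * c t‖ ≤ C * γ ^ t := by
  rw [Real.norm_eq_abs, abs_mul, abs_pow, abs_of_nonneg hγ0, mul_comm]
  exact mul_le_mul_of_nonneg_right (hc t) (pow_nonneg hγ0 t)

theorem summable_pow_mul_of_abs_le {γ C : ℝ} {c : ℕ → ℝ} (hγ0 : 0 ≤ γ) (hγ1 : γ < 1)
    (hc : ∀ t, |c t| ≤ C) : Summable (fun t => γ ^ t * c t) :=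
  .of_norm_bounded ((summable_geometric_of_lt_one hγ0 hγ1).mul_left C) (norm_pow_mul_le hγ0 hc)

theorem abs_tsum_pow_mul_le {γ C : ℝ} {c : ℕ → ℝ} (hγ0 : 0 ≤ γ) (hγ1 : γ < 1)
    (hc : ∀ t, |c t| ≤ C) : |∑' t, γ ^ t * c t| ≤ C / (1 - γ) :=
  calc |∑' t, γ ^ t * c t|
      ≤ ∑' t, C * γ ^ t :=
        tsum_of_norm_bounded ((summable_geometric_of_lt_one hγ0 hγ1).mul_left C).hasSum
          (norm_pow_mul_le hγ0 hc)
    _ = C / (1 - γ) := by rw [tsum_mul_left, tsum_geometric_of_lt_one hγ0 hγ1, div_eq_mul_inv]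

theorem tsum_pow_mul_eq_of_eq_add_mul_succ {γ B : ℝ} {c W : ℕ → ℝ} (hγ : |γ| < 1)
    (hc : Summable fun t => γ ^ t * c t) (hW : ∀ t, |W t| ≤ B)
    (hrec : ∀ t, W t = c t + γ * W (t + 1)) :
    ∑' t, γ ^ t * c t = W 0 := by
  have hpartial : ∀ n, ∑ t ∈ Finset.range n, γ ^ t * c t = W 0 - γ ^ n * W n := by
    intro n
    induction n with
    | zero => simp
    | succ n ih => rw [Finset.sum_range_succ, ih, hrec n]; ring
  have htail : Tendsto (fun n => γ ^ n * W n) atTop (𝓝 0) := by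
    refine squeeze_zero_norm (fun n => ?_)
      (by simpa using (tendsto_pow_atTop_nhds_zero_of_abs_lt_one hγ).abs.mul_const B)
    rw [Real.norm_eq_abs, abs_mul, abs_pow]
    exact mul_le_mul_of_nonneg_left (hW n) (pow_nonneg (abs_nonneg γ) n)
  refine tendsto_nhds_unique hc.hasSum.tendsto_sum_nat ?_
  simp_rw [hpartial]
  simpa using tendsto_const_nhds.sub htail

namespace DetMDP

variable {S A : Type*} (step : S → A → S) (r : S → A → ℝ) (γ : ℝ)

def traj (s : S) (u : ℕ → A) : ℕ → S
  | 0 => s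
  | t + 1 => step (traj s u t) (u t)

noncomputable def ret (s : S) (u : ℕ → A) : ℝ :=
  ∑' t, γ ^ t * r (traj step s u t) (u t)

noncomputable def optValue (s : S) : ℝ :=
  ⨆ u, ret step r γ s u

noncomputable def optQValue (s : S) (a : A) : ℝ :=
  r s a + γ * optValue step r γ (step s a)

def policyStep (π : S → A) (x : S) : S :=
  step x (π x)

noncomputable def policyValue (π : S → A) (s : S) : ℝ :=
  ∑' t, γ ^ t * r ((policyStep step π)^[t] s) (π ((policyStep step π)^[t] s))

theorem traj_succ_eq_traj_tail (s : S) (u : ℕ → A) (t : ℕ) :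
    traj step s u (t + 1) = traj step (step s (u 0)) (fun n => u (n + 1)) t := by
  induction t with
  | zero => rfl
  | succ t ih => rw [traj, ih]; rfl

theorem traj_policy (π : S → A) (s : S) (t : ℕ) :
    traj step s (fun n => π ((policyStep step π)^[n] s)) t = (policyStep step π)^[t] s := by
  induction t with
  | zero => rfl
  | succ t ih => rw [traj, ih, Function.iterate_succ_apply']; rfl

theorem policyValue_eq_ret (π : S → A) (s : S) :
    policyValue step r γ π s = ret step r γ s (fun t => π ((policyStep step π)^[t] s)) := by
  simp only [policyValue, ret, traj_policy]

variable {step r γ} {C : ℝ} (hγ0 : 0 ≤ γ) (hγ1 : γ < 1) (hr : ∀ s a, |r s a| ≤ C)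
include hγ0 hγ1 hr

theorem abs_ret_le (s : S) (u : ℕ → A) : |ret step r γ s u| ≤ C / (1 - γ) :=
  abs_tsum_pow_mul_le hγ0 hγ1 fun _ => hr _ _

theorem ret_eq_add_mul_ret_tail (s : S) (u : ℕ → A) :
    ret step r γ s u = r s (u 0) + γ * ret step r γ (step s (u 0)) (fun t => u (t + 1)) := by
  rw [ret, (summable_pow_mul_of_abs_le hγ0 hγ1 fun _ => hr _ _).tsum_eq_zero_add, ret,
    ← tsum_mul_left]
  simp only [traj_succ_eq_traj_tail, pow_succ]
  simp only [traj, pow_zero, mul_one, mul_comm, mul_assoc]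

theorem ret_le_optValue (s : S) (u : ℕ → A) : ret step r γ s u ≤ optValue step r γ s :=
  le_ciSup ⟨C / (1 - γ), by rintro _ ⟨v, rfl⟩; exact (abs_le.1 (abs_ret_le hγ0 hγ1 hr s v)).2⟩ u

theorem abs_optValue_le [Nonempty A] (s : S) : |optValue step r γ s| ≤ C / (1 - γ) := by
  refine abs_le.2 ⟨?_, ciSup_le fun u => (abs_le.1 (abs_ret_le hγ0 hγ1 hr s u)).2⟩
  obtain ⟨a⟩ := ‹Nonempty A›
  exact (abs_le.1 (abs_ret_le hγ0 hγ1 hr s fun _ => a)).1.trans (ret_le_optValue hγ0 hγ1 hr s _)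

theorem optQValue_le_optValue [Nonempty A] (s : S) (a : A) :
    optQValue step r γ s a ≤ optValue step r γ s := by
  suffices γ * optValue step r γ (step s a) ≤ optValue step r γ s - r s a by
    rw [optQValue]; linarith
  rw [optValue, Real.mul_iSup_of_nonneg hγ0]
  refine ciSup_le fun u => le_sub_iff_add_le'.2 ?_
  have hcons := ret_eq_add_mul_ret_tail (step := step) hγ0 hγ1 hr s (Stream'.cons a u)
  exact hcons ▸ ret_le_optValue hγ0 hγ1 hr s _

theorem optValue_eq_optQValue_of_greedy [Nonempty A] {s : S} {a : A}
    (ha : ∀ b, optQValue step r γ s b ≤ optQValue step r γ s a) :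
    optValue step r γ s = optQValue step r γ s a := by
  refine le_antisymm (ciSup_le fun u => ?_) (optQValue_le_optValue hγ0 hγ1 hr s a)
  rw [ret_eq_add_mul_ret_tail hγ0 hγ1 hr]
  refine le_trans ?_ (ha (u 0))
  rw [optQValue]
  gcongr
  exact ret_le_optValue hγ0 hγ1 hr _ _

theorem optValue_eq_policyValue_of_greedy [Nonempty A] {π : S → A}
    (hπ : ∀ x b, optQValue step r γ x b ≤ optQValue step r γ x (π x)) (s : S) :
    optValue step r γ s = policyValue step r γ π s := by
  set x : ℕ → S := fun t => (policyStep step π)^[t] s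
  refine (tsum_pow_mul_eq_of_eq_add_mul_succ (abs_lt.2 ⟨by linarith, hγ1⟩)
    (summable_pow_mul_of_abs_le hγ0 hγ1 fun _ => hr _ _) (W := fun t => optValue step r γ (x t))
    (fun t => abs_optValue_le hγ0 hγ1 hr _) fun t => ?_).symm
  simp only [x, Function.iterate_succ_apply']
  exact optValue_eq_optQValue_of_greedy hγ0 hγ1 hr (hπ _)

theorem optValue_eq_iSup_policyValue [Finite A] [Nonempty A] (s : S) :
    optValue step r γ s = ⨆ π, policyValue step r γ π s := by
  have hle : ∀ ρ, policyValue step r γ ρ s ≤ optValue step r γ s := fun ρ => by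
    rw [policyValue_eq_ret]; exact ret_le_optValue hγ0 hγ1 hr s _
  choose π hπ using fun x => Finite.exists_max (optQValue step r γ x)
  refine le_antisymm ?_ (ciSup_le hle)
  rw [optValue_eq_policyValue_of_greedy hγ0 hγ1 hr hπ]
  exact le_ciSup ⟨_, Set.forall_mem_range.2 hle⟩ π

end DetMDP

theorem stationary_policies_sufficient_general
    {S A : Type*} [Fintype S] [Fintype A] [Nonempty A]
    (step : S → A → S) (r : S → A → ℝ) (γ : ℝ) (hγ0 : 0 ≤ γ) (hγ1 : γ < 1)
    (traj : S → (ℕ → A) → ℕ → S)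
    (htraj0 : ∀ s u, traj s u 0 = s)
    (htrajS : ∀ s u t, traj s u (t + 1) = step (traj s u t) (u t))
    (G : S → (ℕ → A) → ℝ)
    (hG : ∀ s u, G s u = ∑' t : ℕ, γ ^ t * r (traj s u t) (u t))
    (Vstar : S → ℝ)
    (hVstar : ∀ s : S, Vstar s = ⨆ u : ℕ → A, G s u)
    (V : (S → A) → S → ℝ)
    (hV : ∀ (π : S → A) (s : S),
      V π s = ∑' t : ℕ, γ ^ t *
        r ((fun x => step x (π x))^[t] s) (π ((fun x => step x (π x))^[t] s))) :
    ∀ s : S, Vstar s = ⨆ π : S → A, V π s := by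
  have htraj : traj = DetMDP.traj step := by
    funext s u t
    induction t with
    | zero => exact htraj0 s u
    | succ t ih => rw [htrajS, ih, DetMDP.traj]
  have hVstar' : Vstar = DetMDP.optValue step r γ := by
    funext s
    simp only [hVstar, hG, htraj]
    rfl
  have hV' : V = DetMDP.policyValue step r γ := funext fun π => funext (hV π)
  obtain ⟨C, hC⟩ := Finite.exists_le fun p : S × A => |r p.1 p.2|
  intro s
  rw [hVstar', hV']
  exact DetMDP.optValue_eq_iSup_policyValue hγ0 hγ1 (fun s a => hC (s, a)) s

/-- In a finite deterministic MDP with `0 ≤ γ < 1`, stationary deterministic policies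
are sufficient for optimality: `V* s = ⨆ π : S → A, V^π s`. -/
theorem stationary_policies_sufficient
    {S A : Type*} [Fintype S] [Fintype A] [Nonempty S] [Nonempty A]
    (step : S → A → S) (r : S → A → ℝ) (γ : ℝ) (hγ0 : 0 ≤ γ) (hγ1 : γ < 1)
    (traj : S → (ℕ → A) → ℕ → S)
    (htraj0 : ∀ s u, traj s u 0 = s)
    (htrajS : ∀ s u t, traj s u (t + 1) = step (traj s u t) (u t))
    (G : S → (ℕ → A) → ℝ)
    (hG : ∀ s u, G s u = ∑' t : ℕ, γ ^ t * r (traj s u t) (u t))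
    (Vstar : S → ℝ)
    (hVstar : ∀ s : S, Vstar s = ⨆ u : ℕ → A, G s u)
    (V : (S → A) → S → ℝ)
    (hV : ∀ (π : S → A) (s : S),
      V π s = ∑' t : ℕ, γ ^ t *
        r ((fun x => step x (π x))^[t] s) (π ((fun x => step x (π x))^[t] s))) :
    ∀ s : S, Vstar s = ⨆ π : S → A, V π s :=
  stationary_policies_sufficient_general step r γ hγ0 hγ1 traj htraj0 htrajS G hG Vstar hVstar V hV
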